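/- Let 0 < q < 1 and 0 < a < q^{-1}. Then for all m, m' ∈ ℕ the series below converges absolutely and the little q-Laguerre (Wall) polynomials satisfy the orthogonality relation Σ_{n=0}^{∞} [(aq)^n / (q;q)_n] · p_m(q^n;a|q) · p_{m'}(q^n;a|q) = [(aq)^m (q;q)_m] / [(aq;q)_∞ (aq;q)_m] · δ_{m m'}. -/
import Mathlib


open scoped BigOperators

/-- The q-shifted factorial `(a;q)_k`. -/
noncomputable def qPoch (q a : ℝ) (k : ℕ) : ℝ :=
  ∏ j ∈ Finset.range k, (1 - a * q ^ j)

/-- The infinite q-shifted factorial `(a;q)_∞`. -/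
noncomputable def qPochInf (q a : ℝ) : ℝ :=
  ∏' j : ℕ, (1 - a * q ^ j)

/-- The little q-Laguerre (Wall) polynomials `p_n(x;a|q)`. -/
noncomputable def littleQLaguerre (q a : ℝ) (n : ℕ) (x : ℝ) : ℝ :=
  ∑ k ∈ Finset.range (n + 1),
    qPoch q (q ^ (-(n : ℤ))) k / (qPoch q (a * q) k * qPoch q q k) * (q * x) ^ k

set_option maxHeartbeats 1000000

lemma qPoch_zero (q a : ℝ) : qPoch q a 0 = 1 := by simp [qPoch]

lemma qPoch_succ (q a : ℝ) (k : ℕ) :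
    qPoch q a (k + 1) = qPoch q a k * (1 - a * q ^ k) := by
  simp [qPoch, Finset.prod_range_succ]

lemma qPoch_succ' (q a : ℝ) (k : ℕ) :
    qPoch q a (k + 1) = (1 - a) * qPoch q (a * q) k := by
  rw [qPoch, Finset.prod_range_succ']
  simp only [pow_zero, mul_one, qPoch]
  rw [mul_comm]
  congr 1
  apply Finset.prod_congr rfl
  intro j _
  rw [pow_succ']
  ring

lemma qPoch_add (q a : ℝ) (k j : ℕ) :
    qPoch q a (k + j) = qPoch q a k * qPoch q (a * q ^ k) j := by
  rw [qPoch, Finset.prod_range_add]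
  congr 1
  apply Finset.prod_congr rfl
  intro i _
  rw [pow_add]
  ring

lemma qPoch_pos {q a : ℝ} (hq0 : 0 ≤ q) (hq1 : q ≤ 1) (ha0 : 0 ≤ a) (ha1 : a < 1) (k : ℕ) :
    0 < qPoch q a k := by
  apply Finset.prod_pos
  intro j _
  have h1 : q ^ j ≤ 1 := pow_le_one₀ hq0 hq1
  have : a * q ^ j ≤ a * 1 := by
    apply mul_le_mul_of_nonneg_left h1 ha0
  nlinarith

lemma qPoch_ne_zero {q a : ℝ} (hq0 : 0 ≤ q) (hq1 : q ≤ 1) (ha0 : 0 ≤ a) (ha1 : a < 1) (k : ℕ) :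
    qPoch q a k ≠ 0 := (qPoch_pos hq0 hq1 ha0 ha1 k).ne'

lemma summable_log_qPoch {q a : ℝ} (hq0 : 0 < q) (hq1 : q < 1) (ha0 : 0 ≤ a) (ha1 : a < 1) :
    Summable fun j : ℕ => Real.log (1 - a * q ^ j) := by
  rw [← summable_neg_iff]
  have hfac : ∀ j : ℕ, 0 < 1 - a * q ^ j := by
    intro j
    have h1 : q ^ j ≤ 1 := pow_le_one₀ hq0.le hq1.le
    nlinarith
  refine Summable.of_nonneg_of_le (f := fun j => (1 - a)⁻¹ * a * q ^ j) ?_ ?_ ?_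
  · intro j
    simp only [neg_nonneg]
    apply Real.log_nonpos
    · nlinarith [hfac j, pow_nonneg hq0.le j]
    · nlinarith [pow_nonneg hq0.le j, mul_nonneg ha0 (pow_nonneg hq0.le j)]
  · intro j
    have h1 : q ^ j ≤ 1 := pow_le_one₀ hq0.le hq1.le
    have hx : a * q ^ j ≤ a := by nlinarith
    have hx0 : 0 ≤ a * q ^ j := mul_nonneg ha0 (pow_nonneg hq0.le j)
    have h2 : (0:ℝ) < 1 - a := by linarith
    have h3 : -Real.log (1 - a * q ^ j) ≤ (1 - a * q ^ j)⁻¹ - 1 := by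
      have := Real.log_le_sub_one_of_pos (inv_pos.mpr (hfac j))
      rw [Real.log_inv] at this
      linarith
    have hid : (1 - a * q ^ j)⁻¹ * (1 - a * q ^ j) = 1 := inv_mul_cancel₀ (hfac j).ne'
    have hinv : (1 - a * q ^ j)⁻¹ ≤ (1 - a)⁻¹ := by
      apply inv_anti₀ h2
      linarith
    nlinarith [mul_le_mul_of_nonneg_right hinv hx0]
  · exact (summable_geometric_of_lt_one hq0.le hq1).mul_left _

lemma multipliable_qPochInf {q a : ℝ} (hq0 : 0 < q) (hq1 : q < 1) (ha0 : 0 ≤ a) (ha1 : a < 1) :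
    Multipliable fun j : ℕ => 1 - a * q ^ j := by
  have hfac : ∀ j : ℕ, 0 < 1 - a * q ^ j := by
    intro j
    have h1 : q ^ j ≤ 1 := pow_le_one₀ hq0.le hq1.le
    nlinarith
  have h := (summable_log_qPoch hq0 hq1 ha0 ha1).hasSum.rexp
  have he : (Real.exp ∘ fun j : ℕ => Real.log (1 - a * q ^ j)) = fun j : ℕ => 1 - a * q ^ j :=
    funext fun n => Real.exp_log (hfac n)
  rw [he] at h
  exact ⟨_, h⟩

lemma qPochInf_eq_exp {q a : ℝ} (hq0 : 0 < q) (hq1 : q < 1) (ha0 : 0 ≤ a) (ha1 : a < 1) :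
    qPochInf q a = Real.exp (∑' j : ℕ, Real.log (1 - a * q ^ j)) := by
  have hfac : ∀ j : ℕ, 0 < 1 - a * q ^ j := by
    intro j
    have h1 : q ^ j ≤ 1 := pow_le_one₀ hq0.le hq1.le
    nlinarith
  have h := (summable_log_qPoch hq0 hq1 ha0 ha1).hasSum.rexp
  have he : (Real.exp ∘ fun j : ℕ => Real.log (1 - a * q ^ j)) = fun j : ℕ => 1 - a * q ^ j :=
    funext fun n => Real.exp_log (hfac n)
  rw [he] at h
  rw [qPochInf]
  exact h.tprod_eq

lemma qPochInf_pos {q a : ℝ} (hq0 : 0 < q) (hq1 : q < 1) (ha0 : 0 ≤ a) (ha1 : a < 1) :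
    0 < qPochInf q a := by
  rw [qPochInf_eq_exp hq0 hq1 ha0 ha1]; exact Real.exp_pos _

lemma qPochInf_split {q a : ℝ} (hq0 : 0 < q) (hq1 : q < 1) (ha0 : 0 ≤ a) (ha1 : a < 1) (k : ℕ) :
    qPochInf q a = qPoch q a k * qPochInf q (a * q ^ k) := by
  have hfac : ∀ j : ℕ, 0 < 1 - a * q ^ j := by
    intro j
    have h1 : q ^ j ≤ 1 := pow_le_one₀ hq0.le hq1.le
    nlinarith
  have hak0 : 0 ≤ a * q ^ k := mul_nonneg ha0 (pow_nonneg hq0.le k)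
  have hak1 : a * q ^ k < 1 := by
    have h1 : q ^ k ≤ 1 := pow_le_one₀ hq0.le hq1.le
    nlinarith
  rw [qPochInf_eq_exp hq0 hq1 ha0 ha1, qPochInf_eq_exp hq0 hq1 hak0 hak1]
  rw [← Summable.sum_add_tsum_nat_add k (summable_log_qPoch hq0 hq1 ha0 ha1), Real.exp_add]
  congr 1
  · rw [Real.exp_sum, qPoch]
    exact Finset.prod_congr rfl fun j _ => Real.exp_log (hfac j)
  · congr 1
    apply tsum_congr
    intro i
    congr 2
    rw [pow_add]
    ring

lemma qPoch_lower_bound {q : ℝ} (hq0 : 0 < q) (hq1 : q < 1) :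
    ∃ C : ℝ, 0 < C ∧ ∀ n : ℕ, C ≤ qPoch q q n := by
  have hsum := summable_log_qPoch hq0 hq1 hq0.le hq1
  refine ⟨Real.exp (∑' j : ℕ, Real.log (1 - q * q ^ j)), Real.exp_pos _, fun n => ?_⟩
  have hfac : ∀ j : ℕ, 0 < 1 - q * q ^ j := by
    intro j
    have h1 : q ^ j ≤ 1 := pow_le_one₀ hq0.le hq1.le
    nlinarith
  have h1 : qPoch q q n = Real.exp (∑ j ∈ Finset.range n, Real.log (1 - q * q ^ j)) := by
    rw [Real.exp_sum, qPoch]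
    exact (Finset.prod_congr rfl fun j _ => (Real.exp_log (hfac j)).symm)
  rw [h1, Real.exp_le_exp]
  have h2 := (Summable.sum_add_tsum_nat_add n hsum).symm
  have h3 : (∑' j : ℕ, Real.log (1 - q * q ^ (j + n))) ≤ 0 := by
    apply tsum_nonpos
    intro j
    apply Real.log_nonpos
    · nlinarith [hfac (j+n), pow_nonneg hq0.le (j+n)]
    · nlinarith [pow_nonneg hq0.le (j+n), mul_nonneg hq0.le (pow_nonneg hq0.le (j+n))]
  linarith [h2]

lemma summable_euler {q z : ℝ} (hq0 : 0 < q) (hq1 : q < 1) (hz0 : 0 ≤ z) (hz1 : z < 1) :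
    Summable fun n : ℕ => z ^ n / qPoch q q n := by
  obtain ⟨C, hC0, hCle⟩ := qPoch_lower_bound hq0 hq1
  refine Summable.of_nonneg_of_le (f := fun n => C⁻¹ * z ^ n) ?_ ?_ ?_
  · intro n
    exact div_nonneg (pow_nonneg hz0 n) ((hC0.trans_le (hCle n)).le)
  · intro n
    rw [div_eq_inv_mul]
    apply mul_le_mul_of_nonneg_right _ (pow_nonneg hz0 n)
    exact inv_anti₀ hC0 (hCle n)
  · exact (summable_geometric_of_lt_one hz0 hz1).mul_left _

lemma euler_tsum_eq {q z : ℝ} (hq0 : 0 < q) (hq1 : q < 1) (hz0 : 0 ≤ z) (hz1 : z < 1) :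
    (∑' n : ℕ, z ^ n / qPoch q q n) =
      1 + ∑' n : ℕ, z ^ (n + 1) / qPoch q q (n + 1) := by
  rw [Summable.tsum_eq_zero_add (summable_euler hq0 hq1 hz0 hz1)]
  simp [qPoch_zero]

lemma euler_func {q z : ℝ} (hq0 : 0 < q) (hq1 : q < 1) (hz0 : 0 ≤ z) (hz1 : z < 1) :
    (1 - z) * ∑' n : ℕ, z ^ n / qPoch q q n = ∑' n : ℕ, (q * z) ^ n / qPoch q q n := by
  have hqz0 : 0 ≤ q * z := mul_nonneg hq0.le hz0
  have hqz1 : q * z < 1 := by nlinarith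
  have S := summable_euler hq0 hq1 hz0 hz1
  have SA : Summable fun n : ℕ => z ^ (n + 1) / qPoch q q (n + 1) :=
    (summable_nat_add_iff 1).mpr S
  have SB : Summable fun n : ℕ => z ^ (n + 1) / qPoch q q n :=
    (S.mul_left z).congr fun n => by ring
  have hzF : z * ∑' n : ℕ, z ^ n / qPoch q q n = ∑' n : ℕ, z ^ (n + 1) / qPoch q q n := by
    rw [← tsum_mul_left]
    exact tsum_congr fun n => by ring
  have key : ∀ n : ℕ, z ^ (n + 1) / qPoch q q (n + 1) - z ^ (n + 1) / qPoch q q n =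
      (q * z) ^ (n + 1) / qPoch q q (n + 1) := by
    intro n
    have hPn : qPoch q q n ≠ 0 := qPoch_ne_zero hq0.le hq1.le hq0.le hq1 n
    have hfac : (1 - q * q ^ n) ≠ 0 := by
      have h1 : q ^ n ≤ 1 := pow_le_one₀ hq0.le hq1.le
      have : q * q ^ n < 1 := by nlinarith
      linarith
    rw [qPoch_succ, mul_pow]
    field_simp
    ring
  rw [sub_mul, one_mul, hzF, euler_tsum_eq hq0 hq1 hz0 hz1,
    euler_tsum_eq hq0 hq1 hqz0 hqz1, add_sub_assoc, ← Summable.tsum_sub SA SB]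
  congr 1
  exact tsum_congr key

lemma euler {q z : ℝ} (hq0 : 0 < q) (hq1 : q < 1) (hz0 : 0 ≤ z) (hz1 : z < 1) :
    (∑' n : ℕ, z ^ n / qPoch q q n) * qPochInf q z = 1 := by
  obtain ⟨C, hC0, hCle⟩ := qPoch_lower_bound hq0 hq1
  set F : ℝ → ℝ := fun w => ∑' n : ℕ, w ^ n / qPoch q q n with hF
  have hwmem : ∀ N : ℕ, 0 ≤ q ^ N * z ∧ q ^ N * z < 1 := by
    intro N
    have h1 : q ^ N ≤ 1 := pow_le_one₀ hq0.le hq1.le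
    have h2 : 0 ≤ q ^ N := pow_nonneg hq0.le N
    constructor
    · exact mul_nonneg h2 hz0
    · nlinarith
  have iter : ∀ N : ℕ, qPoch q z N * F z = F (q ^ N * z) := by
    intro N
    induction N with
    | zero => simp [qPoch_zero]
    | succ N ih =>
      obtain ⟨hw0, hw1⟩ := hwmem N
      have := euler_func hq0 hq1 hw0 hw1
      rw [qPoch_succ, mul_comm (qPoch q z N) _, mul_assoc, ih]
      have harg : q * (q ^ N * z) = q ^ (N + 1) * z := by ring
      rw [harg] at this
      simp only [hF]
      rw [← this]
      ring
  -- upper and lower bounds for F w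
  have hFlb : ∀ w : ℝ, 0 ≤ w → w < 1 → 1 ≤ F w := by
    intro w hw0 hw1
    simp only [hF]
    rw [euler_tsum_eq hq0 hq1 hw0 hw1, le_add_iff_nonneg_right]
    apply tsum_nonneg
    intro n
    exact div_nonneg (pow_nonneg hw0 _) (qPoch_pos hq0.le hq1.le hq0.le hq1 _).le
  have hFub : ∀ w : ℝ, 0 ≤ w → w ≤ z → F w ≤ 1 + (C⁻¹ * (1 - z)⁻¹) * w := by
    intro w hw0 hwz
    have hw1 : w < 1 := lt_of_le_of_lt hwz hz1
    simp only [hF]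
    rw [euler_tsum_eq hq0 hq1 hw0 hw1]
    have hbd : ∀ n : ℕ, w ^ (n + 1) / qPoch q q (n + 1) ≤ (C⁻¹ * w) * z ^ n := by
      intro n
      have h1 : w ^ (n + 1) ≤ w * z ^ n := by
        rw [pow_succ']
        exact mul_le_mul_of_nonneg_left (pow_le_pow_left₀ hw0 hwz n) hw0
      have h2 : w ^ (n + 1) / qPoch q q (n + 1) ≤ w ^ (n + 1) * C⁻¹ := by
        rw [div_eq_mul_inv]
        exact mul_le_mul_of_nonneg_left (inv_anti₀ hC0 (hCle (n+1)))
          (pow_nonneg hw0 _)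
      calc w ^ (n + 1) / qPoch q q (n + 1) ≤ w ^ (n + 1) * C⁻¹ := h2
        _ ≤ (w * z ^ n) * C⁻¹ := by
            exact mul_le_mul_of_nonneg_right h1 (inv_nonneg.mpr hC0.le)
        _ = (C⁻¹ * w) * z ^ n := by ring
    have hsum2 : Summable fun n : ℕ => (C⁻¹ * w) * z ^ n :=
      (summable_geometric_of_lt_one hz0 hz1).mul_left _
    have := Summable.tsum_le_tsum hbd ((summable_nat_add_iff 1).mpr
      (summable_euler hq0 hq1 hw0 hw1)) hsum2
    have hgeo : ∑' n : ℕ, (C⁻¹ * w) * z ^ n = (C⁻¹ * w) * (1 - z)⁻¹ := by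
      rw [tsum_mul_left, tsum_geometric_of_lt_one hz0 hz1]
    rw [hgeo] at this
    have : (1:ℝ) + ∑' n : ℕ, w ^ (n+1) / qPoch q q (n+1) ≤ 1 + C⁻¹ * w * (1 - z)⁻¹ := by
      linarith
    calc (1:ℝ) + ∑' n : ℕ, w ^ (n+1) / qPoch q q (n+1) ≤ 1 + C⁻¹ * w * (1-z)⁻¹ := this
      _ = 1 + (C⁻¹ * (1-z)⁻¹) * w := by ring
  -- limit of F (q^N z) is 1
  have hub_tend : Filter.Tendsto (fun N : ℕ => 1 + (C⁻¹ * (1 - z)⁻¹) * (q ^ N * z))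
      Filter.atTop (nhds 1) := by
    have h1 : Filter.Tendsto (fun N : ℕ => q ^ N) Filter.atTop (nhds 0) :=
      tendsto_pow_atTop_nhds_zero_of_lt_one hq0.le hq1
    have h2 := ((h1.mul_const z).const_mul (C⁻¹ * (1 - z)⁻¹)).const_add 1
    simpa using h2
  have htend1 : Filter.Tendsto (fun N : ℕ => F (q ^ N * z)) Filter.atTop (nhds 1) := by
    apply tendsto_of_tendsto_of_tendsto_of_le_of_le tendsto_const_nhds hub_tend
    · intro N
      exact hFlb _ (hwmem N).1 (hwmem N).2
    · intro N
      apply hFub _ (hwmem N).1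
      have h1 : q ^ N ≤ 1 := pow_le_one₀ hq0.le hq1.le
      nlinarith [hz0]
  have htend2 : Filter.Tendsto (fun N : ℕ => qPoch q z N * F z) Filter.atTop
      (nhds (qPochInf q z * F z)) := by
    have hm := ((multipliable_qPochInf hq0 hq1 hz0 hz1).hasProd).tendsto_prod_nat
    exact hm.mul_const (F z)
  have heq : (fun N : ℕ => qPoch q z N * F z) = fun N : ℕ => F (q ^ N * z) :=
    funext iter
  rw [heq] at htend2
  have := tendsto_nhds_unique htend2 htend1
  rw [mul_comm]
  exact this

lemma expand_general (c : ℕ → ℕ → ℝ) (r : ℕ → ℝ) (x : ℝ)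
    (hrec : ∀ j i, c (j + 1) (i + 1) = c j (i + 1) - r j * c j i)
    (h0 : ∀ j, c (j + 1) 0 = c j 0)
    (hz : ∀ j, c j (j + 1) = 0) :
    ∀ j, ∑ i ∈ Finset.range (j + 1), c j i * x ^ i =
      c 0 0 * ∏ t ∈ Finset.range j, (1 - r t * x) := by
  intro j
  induction j with
  | zero => simp
  | succ j ih =>
    rw [Finset.prod_range_succ, ← mul_assoc, ← ih]
    rw [Finset.sum_range_succ' (fun i => c (j + 1) i * x ^ i) (j + 1)]
    simp only [hrec, h0, pow_zero, mul_one]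
    have h1 : ∑ i ∈ Finset.range (j + 1), (c j (i + 1) - r j * c j i) * x ^ (i + 1) =
        (∑ i ∈ Finset.range (j + 1), c j (i + 1) * x ^ (i + 1)) -
          r j * x * ∑ i ∈ Finset.range (j + 1), c j i * x ^ i := by
      rw [Finset.sum_congr rfl (fun i (_ : i ∈ Finset.range (j+1)) =>
        (by ring : (c j (i + 1) - r j * c j i) * x ^ (i + 1)
          = c j (i + 1) * x ^ (i + 1) - r j * x * (c j i * x ^ i)))]
      rw [Finset.sum_sub_distrib, ← Finset.mul_sum]
    rw [h1]
    have h2 : (∑ i ∈ Finset.range (j + 1), c j (i + 1) * x ^ (i + 1)) + c j 0 =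
        ∑ i ∈ Finset.range (j + 1), c j i * x ^ i := by
      have h3 := Finset.sum_range_succ' (fun i => c j i * x ^ i) (j + 1)
      have h4 := Finset.sum_range_succ (fun i => c j i * x ^ i) (j + 1)
      rw [hz j] at h4
      simp only [pow_zero, mul_one] at h3
      simp only [zero_mul] at h4
      rw [h4, add_zero] at h3
      exact h3.symm
    have h5 : (∑ i ∈ Finset.range (j + 1), c j i * x ^ i) * (1 - r j * x) =
        (∑ i ∈ Finset.range (j + 1), c j i * x ^ i) -
          r j * x * ∑ i ∈ Finset.range (j + 1), c j i * x ^ i := by ring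
    rw [h5, ← h2]
    ring

noncomputable def gc (q : ℝ) : ℕ → ℕ → ℝ
  | 0, 0 => 1
  | 0, _ + 1 => 0
  | j + 1, 0 => gc q j 0
  | j + 1, i + 1 => gc q j (i + 1) - q ^ j * gc q j i

lemma gc_eq_zero (q : ℝ) : ∀ j i : ℕ, j < i → gc q j i = 0 := by
  intro j
  induction j with
  | zero =>
    intro i hi
    match i, hi with
    | i + 1, _ => rfl
  | succ j ih =>
    intro i hi
    match i, hi with
    | i + 1, hi =>
      show gc q j (i + 1) - q ^ j * gc q j i = 0
      rw [ih (i + 1) (by omega), ih i (by omega)]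
      ring

lemma gc_zero_eq_one (q : ℝ) : ∀ j : ℕ, gc q j 0 = 1 := by
  intro j
  induction j with
  | zero => rfl
  | succ j ih => show gc q j 0 = 1; exact ih

lemma gc_expand (q x : ℝ) (j : ℕ) :
    ∏ t ∈ Finset.range j, (1 - q ^ t * x) =
      ∑ i ∈ Finset.range (j + 1), gc q j i * x ^ i := by
  rw [expand_general (gc q) (fun t => q ^ t) x (fun j i => rfl) (fun j => rfl)
    (fun j => gc_eq_zero q j (j + 1) (by omega)) j]
  show _ = (1:ℝ) * _
  rw [one_mul]

lemma gc_diag (q : ℝ) : ∀ m : ℕ, gc q m m = (-1) ^ m * q ^ (m.choose 2) := by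
  intro m
  induction m with
  | zero => simp [gc]
  | succ m ih =>
    show gc q m (m + 1) - q ^ m * gc q m m = _
    rw [gc_eq_zero q m (m + 1) (by omega), ih]
    have hch : (m + 1).choose 2 = m.choose 2 + m := by
      rw [Nat.choose_succ_succ]
      simp [Nat.choose_one_right]
      omega
    rw [hch, pow_add]
    ring

lemma zpow_mul_pow_natCast (q : ℝ) (hq : q ≠ 0) (t : ℕ) :
    q ^ (-(t : ℤ) - 1) * q ^ (t + 1) = 1 := by
  have h1 : q ^ (t + 1) = q ^ ((t : ℤ) + 1) := by
    rw [← zpow_natCast q (t + 1)]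
    push_cast
    ring_nf
  rw [h1, ← zpow_add₀ hq]
  norm_num

lemma a_rec {q : ℝ} (hq0 : 0 < q) (hq1 : q < 1) (m k : ℕ) :
    qPoch q (q ^ (-(m : ℤ) - 1)) (k + 1) / qPoch q q (k + 1) =
      qPoch q (q ^ (-(m : ℤ))) (k + 1) / qPoch q q (k + 1) -
        q ^ (-(m : ℤ) - 1) * (qPoch q (q ^ (-(m : ℤ))) k / qPoch q q k) := by
  have hqne : q ≠ 0 := hq0.ne'
  have hu : q ^ (-(m : ℤ) - 1) * q = q ^ (-(m : ℤ)) := by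
    rw [show q ^ (-(m : ℤ)) = q ^ (-(m : ℤ) - 1 + 1) from by norm_num,
      zpow_add₀ hqne, zpow_one]
  have hPk : qPoch q q k ≠ 0 := qPoch_ne_zero hq0.le hq1.le hq0.le hq1 k
  have hfac : 1 - q * q ^ k ≠ 0 := by
    have h1 : q ^ k ≤ 1 := pow_le_one₀ hq0.le hq1.le
    have : q * q ^ k < 1 := by nlinarith
    linarith
  rw [qPoch_succ' q (q ^ (-(m : ℤ) - 1)) k, hu, qPoch_succ q (q ^ (-(m : ℤ))) k,
    qPoch_succ q q k]
  set u := q ^ (-(m : ℤ) - 1) with hudef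
  set w := q ^ (-(m : ℤ)) with hwdef
  set B := qPoch q w k with hBdef
  set P := qPoch q q k with hPdef
  rw [← hu]
  field_simp
  ring

lemma A_expand {q : ℝ} (hq0 : 0 < q) (hq1 : q < 1) (m : ℕ) (z : ℝ) :
    ∑ k ∈ Finset.range (m + 1), qPoch q (q ^ (-(m : ℤ))) k / qPoch q q k * z ^ k =
      ∏ t ∈ Finset.range m, (1 - q ^ (-(t : ℤ) - 1) * z) := by
  have h := expand_general (fun j i => qPoch q (q ^ (-(j : ℤ))) i / qPoch q q i)
      (fun t => q ^ (-(t : ℤ) - 1)) z ?_ ?_ ?_ m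
  · rw [h]
    simp [qPoch_zero]
  · intro j i
    have hcast : (-(((j : ℕ) + 1 : ℕ) : ℤ)) = -(j : ℤ) - 1 := by push_cast; ring
    show qPoch q (q ^ (-((j + 1 : ℕ) : ℤ))) (i + 1) / qPoch q q (i + 1) = _
    rw [hcast]
    exact a_rec hq0 hq1 j i
  · intro j
    simp [qPoch_zero]
  · intro j
    have hnum : qPoch q (q ^ (-(j : ℤ))) (j + 1) = 0 := by
      apply Finset.prod_eq_zero (Finset.self_mem_range_succ j)
      have h1 : q ^ (-(j : ℤ)) * q ^ j = 1 := by
        rw [← zpow_natCast q j, ← zpow_add₀ hq0.ne']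
        norm_num
      rw [h1]
      ring
    show qPoch q (q ^ (-(j : ℤ))) (j + 1) / qPoch q q (j + 1) = 0
    rw [hnum, zero_div]

lemma A_val {q : ℝ} (hq0 : 0 < q) (hq1 : q < 1) (m i : ℕ) (him : i ≤ m) :
    ∑ k ∈ Finset.range (m + 1), qPoch q (q ^ (-(m : ℤ))) k / qPoch q q k *
        ((q : ℝ) ^ (i + 1)) ^ k = if i = m then qPoch q q m else 0 := by
  rw [A_expand hq0 hq1 m ((q : ℝ) ^ (i + 1))]
  by_cases h : i = m
  · subst h
    rw [if_pos rfl, qPoch, ← Finset.prod_range_reflect (fun j => 1 - q * q ^ j) i]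
    apply Finset.prod_congr rfl
    intro t ht
    rw [Finset.mem_range] at ht
    congr 1
    have h1 : q * q ^ (i - 1 - t) = q ^ (i - t) := by
      rw [← pow_succ']
      congr 1
      omega
    have h2 : (q : ℝ) ^ (i + 1) = q ^ (t + 1) * q ^ (i - t) := by
      rw [← pow_add]
      congr 1
      omega
    rw [h1, h2, ← mul_assoc, zpow_mul_pow_natCast q hq0.ne' t, one_mul]
  · rw [if_neg h]
    have hi : i < m := lt_of_le_of_ne him h
    apply Finset.prod_eq_zero (Finset.mem_range.mpr hi)
    rw [zpow_mul_pow_natCast q hq0.ne' i]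
    ring

lemma sum_range_succ_id (m : ℕ) : ∑ j ∈ Finset.range m, (j + 1) = m.choose 2 + m := by
  induction m with
  | zero => simp
  | succ m ih =>
    rw [Finset.sum_range_succ, ih, Nat.choose_succ_succ]
    simp [Nat.choose_one_right]
    omega

lemma qPoch_qinv_mul {q : ℝ} (hq0 : 0 < q) (m : ℕ) :
    qPoch q (q ^ (-(m : ℤ))) m * q ^ (m.choose 2 + m) = (-1) ^ m * qPoch q q m := by
  have hsum : ∑ j ∈ Finset.range m, (m - j) = m.choose 2 + m := by
    rw [← sum_range_succ_id m, ← Finset.sum_range_reflect (fun j => j + 1) m]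
    apply Finset.sum_congr rfl
    intro j hj
    rw [Finset.mem_range] at hj
    omega
  rw [← hsum, ← Finset.prod_pow_eq_pow_sum, qPoch, ← Finset.prod_mul_distrib]
  have hrhs : (-1 : ℝ) ^ m * qPoch q q m =
      ∏ j ∈ Finset.range m, (-(1 - q * q ^ j)) := by
    have hconst : (-1 : ℝ) ^ m = ∏ _j ∈ Finset.range m, (-1 : ℝ) := by
      rw [Finset.prod_const, Finset.card_range]
    rw [qPoch, hconst, ← Finset.prod_mul_distrib]
    exact Finset.prod_congr rfl fun j _ => by ring
  rw [hrhs, ← Finset.prod_range_reflect (fun j => -(1 - q * q ^ j)) m]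
  apply Finset.prod_congr rfl
  intro j hj
  rw [Finset.mem_range] at hj
  have h1 : (q : ℝ) ^ j * q ^ (m - j) = q ^ m := by
    rw [← pow_add]
    congr 1
    omega
  have h2 : q ^ (-(m : ℤ)) * (q : ℝ) ^ m = 1 := by
    rw [← zpow_natCast q m, ← zpow_add₀ hq0.ne']
    norm_num
  have h3 : q * q ^ (m - 1 - j) = q ^ (m - j) := by
    rw [← pow_succ']
    congr 1
    omega
  calc (1 - q ^ (-(m : ℤ)) * q ^ j) * q ^ (m - j)
      = q ^ (m - j) - q ^ (-(m : ℤ)) * (q ^ j * q ^ (m - j)) := by ring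
    _ = q ^ (m - j) - 1 := by rw [h1, h2]
    _ = -(1 - q * q ^ (m - 1 - j)) := by rw [h3]; ring

lemma Gval {q a : ℝ} (hq0 : 0 < q) (hq1 : q < 1) (m j : ℕ) (hjm : j ≤ m) :
    ∑ k ∈ Finset.range (m + 1), qPoch q (q ^ (-(m : ℤ))) k / qPoch q q k * q ^ k *
        qPoch q (a * q * q ^ k) j =
      if j = m then (-1) ^ m * q ^ (m.choose 2) * (a * q) ^ m * qPoch q q m else 0 := by
  have hstep1 : ∀ k : ℕ,
      qPoch q (q ^ (-(m : ℤ))) k / qPoch q q k * q ^ k * qPoch q (a * q * q ^ k) j =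
        ∑ i ∈ Finset.range (j + 1), gc q j i * (a * q) ^ i *
          (qPoch q (q ^ (-(m : ℤ))) k / qPoch q q k * ((q : ℝ) ^ (i + 1)) ^ k) := by
    intro k
    have hexp : qPoch q (a * q * q ^ k) j =
        ∑ i ∈ Finset.range (j + 1), gc q j i * (a * q * q ^ k) ^ i := by
      rw [← gc_expand q (a * q * q ^ k) j, qPoch]
      exact Finset.prod_congr rfl fun t _ => by ring
    rw [hexp, Finset.mul_sum]
    apply Finset.sum_congr rfl
    intro i _
    have hp1 : (a * q * q ^ k) ^ i = (a * q) ^ i * q ^ (k * i) := by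
      rw [mul_pow, ← pow_mul]
    have hp2 : (q : ℝ) ^ k * q ^ (k * i) = ((q : ℝ) ^ (i + 1)) ^ k := by
      rw [← pow_mul, ← pow_add]
      congr 1
      ring
    rw [hp1, ← hp2]
    ring
  rw [Finset.sum_congr rfl fun k _ => hstep1 k, Finset.sum_comm]
  have hinner : ∀ i ∈ Finset.range (j + 1),
      (∑ k ∈ Finset.range (m + 1), gc q j i * (a * q) ^ i *
        (qPoch q (q ^ (-(m : ℤ))) k / qPoch q q k * ((q : ℝ) ^ (i + 1)) ^ k)) =
      gc q j i * (a * q) ^ i * (if i = m then qPoch q q m else 0) := by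
    intro i hi
    rw [Finset.mem_range] at hi
    rw [← Finset.mul_sum, A_val hq0 hq1 m i (by omega)]
  rw [Finset.sum_congr rfl hinner]
  by_cases hj : j = m
  · subst hj
    rw [if_pos rfl]
    rw [Finset.sum_eq_single j]
    · rw [if_pos rfl, gc_diag]
    · intro i _ hne
      rw [if_neg hne, mul_zero]
    · intro h
      exact absurd (Finset.self_mem_range_succ j) h
  · rw [if_neg hj]
    apply Finset.sum_eq_zero
    intro i hi
    rw [Finset.mem_range] at hi
    have : i ≠ m := by omega
    rw [if_neg this, mul_zero]

lemma Tval {q a : ℝ} (hq0 : 0 < q) (hq1 : q < 1) (ha0 : 0 < a) (haq1 : a * q < 1) (r : ℕ) :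
    ∑' n : ℕ, (a * q * q ^ r) ^ n / qPoch q q n =
      qPoch q (a * q) r / qPochInf q (a * q) := by
  have haq0 : 0 ≤ a * q := by positivity
  have hz0 : 0 ≤ a * q * q ^ r := by positivity
  have hz1 : a * q * q ^ r < 1 := by
    have h1 : q ^ r ≤ 1 := pow_le_one₀ hq0.le hq1.le
    nlinarith
  have he := euler hq0 hq1 hz0 hz1
  have hsplit := qPochInf_split hq0 hq1 haq0 haq1 r
  have h2 : qPochInf q (a * q * q ^ r) ≠ 0 := (qPochInf_pos hq0 hq1 hz0 hz1).ne'
  have h3 : qPoch q (a * q) r ≠ 0 := qPoch_ne_zero hq0.le hq1.le haq0 haq1 r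
  rw [hsplit, eq_div_iff (mul_ne_zero h3 h2)]
  linear_combination qPoch q (a * q) r * he

lemma key {q a : ℝ} (hq0 : 0 < q) (hq1 : q < 1) (ha0 : 0 < a) (ha1 : a < q⁻¹)
    (m m' : ℕ) (hle : m' ≤ m) :
    Summable (fun n : ℕ =>
      |(a * q) ^ n / qPoch q q n *
        littleQLaguerre q a m (q ^ n) * littleQLaguerre q a m' (q ^ n)|) ∧
    ∑' n : ℕ,
        (a * q) ^ n / qPoch q q n *
          littleQLaguerre q a m (q ^ n) * littleQLaguerre q a m' (q ^ n) =
      (a * q) ^ m * qPoch q q m / (qPochInf q (a * q) * qPoch q (a * q) m) *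
        (if m = m' then 1 else 0) := by
  have haq0 : 0 ≤ a * q := by positivity
  have haq1 : a * q < 1 := by
    have := mul_lt_mul_of_pos_right ha1 hq0
    rwa [inv_mul_cancel₀ hq0.ne'] at this
  obtain ⟨C, hC0, hCle⟩ := qPoch_lower_bound hq0 hq1
  have hPpos : ∀ n, 0 < qPoch q q n := qPoch_pos hq0.le hq1.le hq0.le hq1
  have hPa : ∀ k : ℕ, qPoch q (a * q) k ≠ 0 :=
    qPoch_ne_zero hq0.le hq1.le haq0 haq1
  have hPinf : 0 < qPochInf q (a * q) := qPochInf_pos hq0 hq1 haq0 haq1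
  -- bound on the polynomials
  have hLbound : ∀ (j n : ℕ), |littleQLaguerre q a j (q ^ n)| ≤
      ∑ k ∈ Finset.range (j + 1),
        |qPoch q (q ^ (-(j : ℤ))) k / (qPoch q (a * q) k * qPoch q q k)| := by
    intro j n
    refine (Finset.abs_sum_le_sum_abs _ _).trans ?_
    apply Finset.sum_le_sum
    intro k _
    rw [abs_mul]
    have h1 : (0:ℝ) ≤ q * q ^ n := by positivity
    have h2 : q * q ^ n ≤ 1 := by
      have := pow_le_one₀ hq0.le hq1.le (n := n)
      nlinarith
    have h3 : |(q * q ^ n) ^ k| ≤ 1 := by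
      rw [abs_pow, abs_of_nonneg h1]
      exact pow_le_one₀ h1 h2
    nlinarith [abs_nonneg (qPoch q (q ^ (-(j : ℤ))) k /
      (qPoch q (a * q) k * qPoch q q k))]
  set Bm := ∑ k ∈ Finset.range (m + 1),
    |qPoch q (q ^ (-(m : ℤ))) k / (qPoch q (a * q) k * qPoch q q k)| with hBm
  set Bm' := ∑ k ∈ Finset.range (m' + 1),
    |qPoch q (q ^ (-(m' : ℤ))) k / (qPoch q (a * q) k * qPoch q q k)| with hBm'
  have hBm0 : 0 ≤ Bm := Finset.sum_nonneg fun k _ => abs_nonneg _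
  have hBm'0 : 0 ≤ Bm' := Finset.sum_nonneg fun k _ => abs_nonneg _
  have hSabs : Summable (fun n : ℕ =>
      |(a * q) ^ n / qPoch q q n *
        littleQLaguerre q a m (q ^ n) * littleQLaguerre q a m' (q ^ n)|) := by
    refine Summable.of_nonneg_of_le (f := fun n => (C⁻¹ * Bm * Bm') * (a * q) ^ n)
      (fun n => abs_nonneg _) ?_
      (((summable_geometric_of_lt_one haq0 haq1)).mul_left _)
    intro n
    rw [abs_mul, abs_mul, abs_div]
    have hw1 : |(a * q) ^ n| = (a * q) ^ n := abs_of_nonneg (by positivity)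
    have hw2 : |qPoch q q n| = qPoch q q n := abs_of_nonneg (hPpos n).le
    rw [hw1, hw2]
    have hw3 : (a * q) ^ n / qPoch q q n ≤ C⁻¹ * (a * q) ^ n := by
      rw [div_eq_mul_inv, mul_comm]
      apply mul_le_mul_of_nonneg_right _ (by positivity)
      exact inv_anti₀ hC0 (hCle n)
    have hw0 : (0:ℝ) ≤ (a * q) ^ n / qPoch q q n := div_nonneg (by positivity) (hPpos n).le
    calc (a * q) ^ n / qPoch q q n * |littleQLaguerre q a m (q ^ n)| *
          |littleQLaguerre q a m' (q ^ n)|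
        ≤ (C⁻¹ * (a * q) ^ n) * Bm * Bm' := by
          apply mul_le_mul _ (hLbound m' n) (abs_nonneg _)
            (mul_nonneg (by positivity) hBm0)
          apply mul_le_mul hw3 (hLbound m n) (abs_nonneg _) (by positivity)

      _ = (C⁻¹ * Bm * Bm') * (a * q) ^ n := by ring
  refine ⟨hSabs, ?_⟩
  -- expand the term as a double finite sum
  have hterm : ∀ n : ℕ,
      (a * q) ^ n / qPoch q q n *
        littleQLaguerre q a m (q ^ n) * littleQLaguerre q a m' (q ^ n) =
      ∑ k ∈ Finset.range (m + 1), ∑ k' ∈ Finset.range (m' + 1),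
        (qPoch q (q ^ (-(m : ℤ))) k / (qPoch q (a * q) k * qPoch q q k) * q ^ k) *
          (qPoch q (q ^ (-(m' : ℤ))) k' / (qPoch q (a * q) k' * qPoch q q k') * q ^ k') *
          ((a * q * q ^ (k + k')) ^ n / qPoch q q n) := by
    intro n
    rw [littleQLaguerre, littleQLaguerre, mul_assoc, Finset.sum_mul_sum, Finset.mul_sum]
    apply Finset.sum_congr rfl
    intro k _
    rw [Finset.mul_sum]
    apply Finset.sum_congr rfl
    intro k' _
    have e1 : ((q : ℝ) * q ^ n) ^ k = q ^ k * q ^ (n * k) := by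
      rw [mul_pow, ← pow_mul]
    have e2 : ((q : ℝ) * q ^ n) ^ k' = q ^ k' * q ^ (n * k') := by
      rw [mul_pow, ← pow_mul]
    have e3 : (a * q * q ^ (k + k')) ^ n = (a * q) ^ n * (q ^ (n * k) * q ^ (n * k')) := by
      rw [mul_pow, ← pow_mul, ← pow_add]
      congr 1
      ring
    rw [e1, e2, e3]
    ring
  have hsummz : ∀ k k' : ℕ, Summable (fun n : ℕ =>
      (a * q * q ^ (k + k')) ^ n / qPoch q q n) := by
    intro k k'
    apply summable_euler hq0 hq1 (by positivity)
    have h1 : q ^ (k + k') ≤ 1 := pow_le_one₀ hq0.le hq1.le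
    nlinarith
  have hVal : ∑' n : ℕ,
      (a * q) ^ n / qPoch q q n *
        littleQLaguerre q a m (q ^ n) * littleQLaguerre q a m' (q ^ n) =
      ∑ k ∈ Finset.range (m + 1), ∑ k' ∈ Finset.range (m' + 1),
        (qPoch q (q ^ (-(m : ℤ))) k / (qPoch q (a * q) k * qPoch q q k) * q ^ k) *
          (qPoch q (q ^ (-(m' : ℤ))) k' / (qPoch q (a * q) k' * qPoch q q k') * q ^ k') *
          (qPoch q (a * q) (k + k') / qPochInf q (a * q)) := by
    rw [tsum_congr hterm]
    rw [Summable.tsum_finsetSum (fun k _ => summable_sum fun k' _ => (hsummz k k').mul_left _)]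
    apply Finset.sum_congr rfl
    intro k _
    rw [Summable.tsum_finsetSum (fun k' _ => (hsummz k k').mul_left _)]
    apply Finset.sum_congr rfl
    intro k' _
    rw [tsum_mul_left, Tval hq0 hq1 ha0 haq1 (k + k')]
  rw [hVal]
  -- reorganize terms
  have hreorg : ∀ k k' : ℕ,
      (qPoch q (q ^ (-(m : ℤ))) k / (qPoch q (a * q) k * qPoch q q k) * q ^ k) *
        (qPoch q (q ^ (-(m' : ℤ))) k' / (qPoch q (a * q) k' * qPoch q q k') * q ^ k') *
        (qPoch q (a * q) (k + k') / qPochInf q (a * q)) =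
      (qPoch q (q ^ (-(m' : ℤ))) k' / (qPoch q (a * q) k' * qPoch q q k') * q ^ k' /
          qPochInf q (a * q)) *
        (qPoch q (q ^ (-(m : ℤ))) k / qPoch q q k * q ^ k *
          qPoch q (a * q * q ^ k) k') := by
    intro k k'
    rw [qPoch_add q (a * q) k k']
    simp only [div_eq_mul_inv, mul_inv]
    linear_combination (q ^ k * q ^ k' * qPoch q (q ^ (-(m : ℤ))) k *
      qPoch q (q ^ (-(m' : ℤ))) k' * qPoch q (a * q * q ^ k) k' *
      (qPoch q q k)⁻¹ * (qPoch q (a * q) k')⁻¹ * (qPoch q q k')⁻¹ *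
      (qPochInf q (a * q))⁻¹) * mul_inv_cancel₀ (hPa k)
  rw [Finset.sum_congr rfl fun k _ => Finset.sum_congr rfl fun k' _ => hreorg k k']
  rw [Finset.sum_comm]
  rw [Finset.sum_congr rfl fun k' _ => (Finset.mul_sum _ _ _).symm]
  rw [Finset.sum_congr rfl (fun k' hk' => by
    rw [Gval hq0 hq1 m k' (by
      rw [Finset.mem_range] at hk'
      omega)])]
  by_cases hmm' : m' = m
  · subst hmm'
    rw [if_pos rfl, mul_one]
    rw [Finset.sum_eq_single m']
    · rw [if_pos rfl]
      have hQ := qPoch_qinv_mul hq0 m'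
      rw [pow_add] at hQ
      have hs : ((-1:ℝ)) ^ m' * (-1:ℝ) ^ m' = 1 := by
        rw [← pow_add]
        exact Even.neg_one_pow ⟨m', rfl⟩
      have hP := (hPpos m').ne'
      have hinv : (qPoch q q m')⁻¹ * qPoch q q m' = 1 := inv_mul_cancel₀ hP
      simp only [div_eq_mul_inv, mul_inv]
      linear_combination
        ((qPoch q (a * q) m')⁻¹ * (qPochInf q (a * q))⁻¹ * (a * q) ^ m' *
          (-1:ℝ) ^ m' * (qPoch q q m')⁻¹ * qPoch q q m') * hQ +
        ((qPoch q (a * q) m')⁻¹ * (qPochInf q (a * q))⁻¹ * (a * q) ^ m' *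
          (qPoch q q m')⁻¹ * qPoch q q m' * qPoch q q m') * hs +
        ((qPoch q (a * q) m')⁻¹ * (qPochInf q (a * q))⁻¹ * (a * q) ^ m' *
          qPoch q q m') * hinv
    · intro i _ hne
      rw [if_neg hne, mul_zero]
    · intro h
      exact absurd (Finset.self_mem_range_succ m') h
  · have hne : m ≠ m' := fun h => hmm' h.symm
    rw [if_neg hne, mul_zero]
    apply Finset.sum_eq_zero
    intro k' hk'
    rw [Finset.mem_range] at hk'
    have : k' ≠ m := by omega
    rw [if_neg this, mul_zero]


theorem littleQLaguerre_orthogonality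
    (q a : ℝ) (hq0 : 0 < q) (hq1 : q < 1)
    (ha0 : 0 < a) (ha1 : a < q⁻¹) (m m' : ℕ) :
    Summable (fun n : ℕ =>
      |(a * q) ^ n / qPoch q q n *
        littleQLaguerre q a m (q ^ n) * littleQLaguerre q a m' (q ^ n)|) ∧
    ∑' n : ℕ,
        (a * q) ^ n / qPoch q q n *
          littleQLaguerre q a m (q ^ n) * littleQLaguerre q a m' (q ^ n) =
      (a * q) ^ m * qPoch q q m / (qPochInf q (a * q) * qPoch q (a * q) m) *
        (if m = m' then 1 else 0) := by
  rcases le_or_gt m' m with h | h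
  · exact key hq0 hq1 ha0 ha1 m m' h
  · have hk := key hq0 hq1 ha0 ha1 m' m h.le
    have hne : m ≠ m' := Nat.ne_of_lt h
    constructor
    · refine hk.1.congr fun n => ?_
      congr 1
      ring
    · calc ∑' n : ℕ, (a * q) ^ n / qPoch q q n *
            littleQLaguerre q a m (q ^ n) * littleQLaguerre q a m' (q ^ n)
          = ∑' n : ℕ, (a * q) ^ n / qPoch q q n *
            littleQLaguerre q a m' (q ^ n) * littleQLaguerre q a m (q ^ n) :=
            tsum_congr fun n => by ring
        _ = (a * q) ^ m' * qPoch q q m' /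
              (qPochInf q (a * q) * qPoch q (a * q) m') *
              (if m' = m then 1 else 0) := hk.2
        _ = (a * q) ^ m * qPoch q q m /
              (qPochInf q (a * q) * qPoch q (a * q) m) *
              (if m = m' then 1 else 0) := by
            rw [if_neg (fun hh => hne hh.symm), if_neg hne, mul_zero, mul_zero]
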